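/- For any graph G on n vertices and any 0 ≤ i < n/2, d_i(G) ≤ d_{i+1}(G), where d_i(G) is the number of dominating sets of cardinality i. -/

import Mathlib

/-- The number of dominating sets of cardinality `i` in `G`. -/
noncomputable def domCount {V : Type*} (G : SimpleGraph V) (i : ℕ) : ℕ :=
  Nat.card {s : Finset V // s.card = i ∧ ∀ v, v ∈ s ∨ ∃ u ∈ s, G.Adj u v}

/-!
Dominating sets are closed under enlargement, so the upper shadow of the dominating `i`-sets
consists of dominating `(i+1)`-sets. The upward local LYM inequality
`#𝒜 * (n - i) ≤ #∂⁺𝒜 * (i + 1)` (the downward one applied to complements) then gives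
`d_i ≤ d_{i+1}` as soon as `i + 1 ≤ n - i`.
-/

open Finset
open scoped FinsetFamily

namespace Finset

variable {α : Type*} [DecidableEq α] [Fintype α] {𝒜 : Finset (Finset α)} {r : ℕ}

theorem card_mul_le_card_upShadow_mul (h𝒜 : (𝒜 : Set (Finset α)).Sized r)
    (hr : r ≤ Fintype.card α) :
    #𝒜 * (Fintype.card α - r) ≤ #(∂⁺ 𝒜) * (r + 1) := by
  have h := card_mul_le_card_shadow_mul (h𝒜.compls)
  rwa [card_compls, shadow_compls, card_compls, Nat.sub_sub_self hr] at h

theorem card_le_card_upShadow (h𝒜 : (𝒜 : Set (Finset α)).Sized r)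
    (hr : 2 * r < Fintype.card α) : #𝒜 ≤ #(∂⁺ 𝒜) := by
  have hpos : 0 < Fintype.card α - r := by omega
  refine Nat.le_of_mul_le_mul_right ?_ hpos
  calc #𝒜 * (Fintype.card α - r)
      ≤ #(∂⁺ 𝒜) * (r + 1) := card_mul_le_card_upShadow_mul h𝒜 (by omega)
    _ ≤ #(∂⁺ 𝒜) * (Fintype.card α - r) := Nat.mul_le_mul_left _ (by omega)

theorem upShadow_slice_subset (h𝒜 : IsUpperSet (𝒜 : Set (Finset α))) :
    ∂⁺ (𝒜 # r) ⊆ 𝒜 # (r + 1) := by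
  intro t ht
  obtain ⟨s, hs, hst, hcard⟩ := mem_upShadow_iff_exists_mem_card_add_one.1 ht
  rw [mem_slice] at hs ⊢
  exact ⟨h𝒜 hst hs.1, by rw [hcard, hs.2]⟩

theorem IsUpperSet.card_slice_le_card_slice_succ (h𝒜 : IsUpperSet (𝒜 : Set (Finset α)))
    (hr : 2 * r < Fintype.card α) : #(𝒜 # r) ≤ #(𝒜 # (r + 1)) :=
  (card_le_card_upShadow sized_slice hr).trans (card_le_card (upShadow_slice_subset h𝒜))

end Finset

namespace SimpleGraph

variable {V : Type*} (G : SimpleGraph V)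

def IsDominating (s : Finset V) : Prop := ∀ v, v ∈ s ∨ ∃ u ∈ s, G.Adj u v

variable [Fintype V]

open scoped Classical in
noncomputable def dominatingSets : Finset (Finset V) := univ.filter G.IsDominating

theorem isUpperSet_dominatingSets : IsUpperSet (G.dominatingSets : Set (Finset V)) := by
  intro s t hst hs
  simp only [dominatingSets, coe_filter, mem_univ, true_and] at hs ⊢
  exact fun v => (hs v).imp (@hst v) fun ⟨u, hu, huv⟩ => ⟨u, hst hu, huv⟩

theorem domCount_eq_card_slice (i : ℕ) : domCount G i = #(G.dominatingSets # i) := by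
  classical
  simp only [domCount, dominatingSets, Nat.card_eq_fintype_card, Fintype.card_subtype]
  congr 1
  ext s
  simp [mem_slice, IsDominating, and_comm]

end SimpleGraph

/-- For any graph `G` on `n` vertices and `0 ≤ i < n/2`, `d_i(G) ≤ d_{i+1}(G)`. -/
theorem stmt_18 {V : Type*} [Fintype V] (G : SimpleGraph V) (i : ℕ)
    (hi : 2 * i < Fintype.card V) :
    domCount G i ≤ domCount G (i + 1) := by
  classical
  rw [G.domCount_eq_card_slice, G.domCount_eq_card_slice]
  exact G.isUpperSet_dominatingSets.card_slice_le_card_slice_succ hi
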